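/- arXiv:1305.0678 — 5 statements merged into one kernel-verified Lean document; each statement's English description precedes it below -/
import Mathlib

section
/- Let V be a finite-dimensional real inner product space, P : ℝ → (V →L[ℝ] V) a differentiable family of orthogonal projections, R : ℝ → (V →L[ℝ] V) a continuous family of symmetric linear operators, and c > 0. Let η, ς : ℝ → V be differentiable curves satisfying the linearized Jacobi system η'(t) = ς(t) and ς'(t) = −R(t)(η(t)). Write η_A = P η, ς_A = P ς, η_B = (Id − P) η, ς_B = (Id − P) ς and define Q^c(t) = ⟨η_A(t), ς_A(t)⟩ − c²⟨η_B(t), η_B(t)⟩ − ⟨ς_B(t), ς_B(t)⟩. Then for every t, (Q^c)'(t) = ⟨ς_A, ς_A⟩ − ⟨R η, η_A⟩ + ⟨P' η_B, ς_A⟩ + ⟨η_A, P' ς_B⟩ − 2c²⟨η_B, ς_B⟩ + 2⟨R η, ς_B⟩ + 2c²⟨P' η_A, η_B⟩ + 2⟨P' ς_A, ς_B⟩, where all quantities on the right are evaluated at t. -/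
/-!
Differentiating `Q^c` by the product rule leaves terms in which `P'` acts on `η` or `ς` itself.
Differentiating `P² = P` gives `P'P + PP' = P'`, hence `PP'P = 0` and `(1 - P)P'(1 - P) = 0`:
`P'` exchanges the ranges of `P` and `1 - P`. So against an `A`-component only the `B`-part of the
vector matters, and against a `B`-component only the `A`-part, which yields the mixed terms of the
formula. The curvature terms come from `⟪P x, P y⟫ = ⟪x, P y⟫` for the symmetric idempotents
`P` and `1 - P`.
-/

open RealInnerProductSpace

theorem HasDerivAt.mul_add_mul_eq_of_isIdempotentElem {A : Type*} [NormedRing A]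
    [NormedAlgebra ℝ A] {p : ℝ → A} {d : A} {t : ℝ} (hp : HasDerivAt p d t)
    (hidem : ∀ s, IsIdempotentElem (p s)) : d * p t + p t * d = d := by
  have hpp := hp.mul hp
  rw [show p * p = p from funext hidem] at hpp
  exact hpp.unique hp

namespace IsIdempotentElem

variable {R : Type*} [Ring R] {p d : R}

theorem mul_mul_self_eq_zero (hp : IsIdempotentElem p) (hd : d * p + p * d = d) :
    p * d * p = 0 := by
  have : p * d = p * d * p + p * d := by
    conv_lhs => rw [← hd]
    rw [mul_add, ← mul_assoc p p d, hp.eq, mul_assoc]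
  simpa using this

theorem mul_eq_mul_mul_one_sub (hp : IsIdempotentElem p) (hd : d * p + p * d = d) :
    p * d = p * d * (1 - p) := by
  rw [mul_sub, mul_one, hp.mul_mul_self_eq_zero hd, sub_zero]

theorem one_sub_mul_eq_mul_mul (hp : IsIdempotentElem p) (hd : d * p + p * d = d) :
    (1 - p) * d = (1 - p) * d * p := by
  rw [sub_mul, sub_mul, one_mul, hp.mul_mul_self_eq_zero hd, sub_zero, sub_eq_iff_eq_add, hd]

end IsIdempotentElem

namespace IsStarProjection

variable {V : Type*} [NormedAddCommGroup V] [InnerProductSpace ℝ V] [CompleteSpace V]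
  {p d : V →L[ℝ] V}

theorem inner_apply_apply_eq_inner_apply (hp : IsStarProjection p) (x y : V) :
    ⟪p x, p y⟫ = ⟪x, p y⟫ := by
  rw [hp.isSelfAdjoint.isSymmetric.apply_clm x (p y)]
  exact congrArg _ (DFunLike.congr_fun hp.isIdempotentElem.eq y)

theorem inner_apply_left_eq_inner_apply_one_sub (hp : IsStarProjection p)
    (hd : d * p + p * d = d) (x y : V) : ⟪d x, p y⟫ = ⟪d ((1 - p) x), p y⟫ := by
  have hsymm := hp.isSelfAdjoint.isSymmetric.apply_clm
  calc ⟪d x, p y⟫ = ⟪(p * d) x, y⟫ := (hsymm _ _).symm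
    _ = ⟪(p * d * (1 - p)) x, y⟫ := by rw [← hp.isIdempotentElem.mul_eq_mul_mul_one_sub hd]
    _ = ⟪d ((1 - p) x), p y⟫ := hsymm _ _

theorem inner_apply_right_eq_inner_apply_one_sub (hp : IsStarProjection p)
    (hd : d * p + p * d = d) (x y : V) : ⟪p x, d y⟫ = ⟪p x, d ((1 - p) y)⟫ := by
  rw [real_inner_comm, hp.inner_apply_left_eq_inner_apply_one_sub hd, real_inner_comm]

theorem inner_one_sub_apply_eq_inner_apply_apply (hp : IsStarProjection p)
    (hd : d * p + p * d = d) (x y : V) : ⟪(1 - p) x, d y⟫ = ⟪d (p y), (1 - p) x⟫ := by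
  have hsymm := hp.one_sub.isSelfAdjoint.isSymmetric.apply_clm
  calc ⟪(1 - p) x, d y⟫ = ⟪x, ((1 - p) * d) y⟫ := hsymm _ _
    _ = ⟪x, ((1 - p) * d * p) y⟫ := by rw [← hp.isIdempotentElem.one_sub_mul_eq_mul_mul hd]
    _ = ⟪(1 - p) x, d (p y)⟫ := (hsymm _ _).symm
    _ = ⟪d (p y), (1 - p) x⟫ := real_inner_comm _ _

end IsStarProjection

theorem stmt_1_general {V : Type*} [NormedAddCommGroup V] [InnerProductSpace ℝ V]
    [FiniteDimensional ℝ V]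
    (P : ℝ → (V →L[ℝ] V)) (hP : Differentiable ℝ P)
    (hPsa : ∀ t, IsSelfAdjoint (P t))
    (hPidem : ∀ t, (P t).comp (P t) = P t)
    (R : ℝ → (V →L[ℝ] V))
    (c : ℝ)
    (η ς : ℝ → V) (hη : Differentiable ℝ η) (hς : Differentiable ℝ ς)
    (hη' : ∀ t, deriv η t = ς t)
    (hς' : ∀ t, deriv ς t = -(R t (η t))) :
    ∀ t : ℝ,
      deriv (fun s =>
        ⟪P s (η s), P s (ς s)⟫
          - c ^ 2 * ⟪(1 - P s) (η s), (1 - P s) (η s)⟫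
          - ⟪(1 - P s) (ς s), (1 - P s) (ς s)⟫) t
      = ⟪P t (ς t), P t (ς t)⟫
          - ⟪R t (η t), P t (η t)⟫
          + ⟪deriv P t ((1 - P t) (η t)), P t (ς t)⟫
          + ⟪P t (η t), deriv P t ((1 - P t) (ς t))⟫
          - 2 * c ^ 2 * ⟪(1 - P t) (η t), (1 - P t) (ς t)⟫
          + 2 * ⟪R t (η t), (1 - P t) (ς t)⟫
          + 2 * c ^ 2 * ⟪deriv P t (P t (η t)), (1 - P t) (η t)⟫
          + 2 * ⟪deriv P t (P t (ς t)), (1 - P t) (ς t)⟫ := by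
  intro t
  have hPt := (hP t).hasDerivAt
  set p := P t
  set d := deriv P t
  have hp : IsStarProjection p := ⟨hPidem t, hPsa t⟩
  have hd : d * p + p * d = d := hPt.mul_add_mul_eq_of_isIdempotentElem hPidem
  have hA {u : ℝ → V} {u' : V} (hu : HasDerivAt u u' t) :
      HasDerivAt (fun s => P s (u s)) (d (u t) + p u') t := hPt.clm_apply hu
  have hB {u : ℝ → V} {u' : V} (hu : HasDerivAt u u' t) :
      HasDerivAt (fun s => (1 - P s) (u s)) ((-d) (u t) + (1 - p) u') t :=
    (hPt.const_sub 1).clm_apply hu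
  have hηt : HasDerivAt η (ς t) t := hη' t ▸ (hη t).hasDerivAt
  have hςt : HasDerivAt ς (-(R t (η t))) t := hς' t ▸ (hς t).hasDerivAt
  have hQ := (((hA hηt).inner ℝ (hA hςt)).sub
    (((hB hηt).inner ℝ (hB hηt)).const_mul (c ^ 2))).sub ((hB hςt).inner ℝ (hB hςt))
  refine hQ.deriv.trans ?_
  simp only [neg_apply, map_neg, inner_add_left, inner_add_right, inner_neg_left, inner_neg_right]
  set x := η t
  set y := ς t
  set r := R t x
  rw [hp.inner_apply_right_eq_inner_apply_one_sub hd x y,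
    hp.inner_apply_left_eq_inner_apply_one_sub hd x y,
    real_inner_comm ((1 - p) x) (d x), hp.inner_one_sub_apply_eq_inner_apply_apply hd x x,
    real_inner_comm ((1 - p) y) (d y), hp.inner_one_sub_apply_eq_inner_apply_apply hd y y,
    real_inner_comm (p r) (p x), hp.inner_apply_apply_eq_inner_apply r x,
    real_inner_comm ((1 - p) r) ((1 - p) y), hp.one_sub.inner_apply_apply_eq_inner_apply r y,
    real_inner_comm ((1 - p) x) ((1 - p) y)]
  ring

/-- Derivative of the quadratic form `Q^c` along the linearized Jacobi system
`η' = ς`, `ς' = -R η`, for a differentiable family of orthogonal projections `P`. -/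
theorem stmt_1 {V : Type*} [NormedAddCommGroup V] [InnerProductSpace ℝ V]
    [FiniteDimensional ℝ V]
    (P : ℝ → (V →L[ℝ] V)) (hP : Differentiable ℝ P)
    (hPsa : ∀ t, IsSelfAdjoint (P t))
    (hPidem : ∀ t, (P t).comp (P t) = P t)
    (R : ℝ → (V →L[ℝ] V)) (hRcont : Continuous R)
    (hRsym : ∀ t, IsSelfAdjoint (R t))
    (c : ℝ) (hc : 0 < c)
    (η ς : ℝ → V) (hη : Differentiable ℝ η) (hς : Differentiable ℝ ς)
    (hη' : ∀ t, deriv η t = ς t)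
    (hς' : ∀ t, deriv ς t = -(R t (η t))) :
    ∀ t : ℝ,
      deriv (fun s =>
        ⟪P s (η s), P s (ς s)⟫
          - c ^ 2 * ⟪(1 - P s) (η s), (1 - P s) (η s)⟫
          - ⟪(1 - P s) (ς s), (1 - P s) (ς s)⟫) t
      = ⟪P t (ς t), P t (ς t)⟫
          - ⟪R t (η t), P t (η t)⟫
          + ⟪deriv P t ((1 - P t) (η t)), P t (ς t)⟫
          + ⟪P t (η t), deriv P t ((1 - P t) (ς t))⟫
          - 2 * c ^ 2 * ⟪(1 - P t) (η t), (1 - P t) (ς t)⟫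
          + 2 * ⟪R t (η t), (1 - P t) (ς t)⟫
          + 2 * c ^ 2 * ⟪deriv P t (P t (η t)), (1 - P t) (η t)⟫
          + 2 * ⟪deriv P t (P t (ς t)), (1 - P t) (ς t)⟫ :=
  stmt_1_general P hP hPsa hPidem R c η ς hη hς hη' hς'
end

section
/- Let V be a finite-dimensional real inner product space with an orthogonal direct sum decomposition V = A ⊕ B, with orthogonal projections P_A, P_B (write η_A = P_A η, η_B = P_B η). Let α > β > 0 and e ∈ (β, α). Let K : V →L[ℝ] V be a symmetric operator with K(A) ⊆ A and K(B) ⊆ B such that ⟨K x, x⟩ ≤ −α²‖x‖² for all x ∈ A, and ‖K x‖ ≤ β²‖x‖ for all x ∈ B. Then for all η, ς ∈ V with ⟨η_A, ς_A⟩ − e²‖η_B‖² − ‖ς_B‖² > 0, one has ‖ς_A‖² − ⟨K η_A, η_A⟩ − 2e²⟨η_B, ς_B⟩ + 2⟨K η_B, ς_B⟩ > 0. -/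
/-!
Write `a, c` for the `A`-parts and `b, d` for the `B`-parts of `η, ς`. Completing the square gives
`‖c‖² - ⟪Ka, a⟫ ≥ ‖c‖² + α²‖a‖² ≥ 2α⟪a, c⟫`, which on the cone exceeds `2α(e²‖b‖² + ‖d‖²)`.
The `B`-terms are bounded below by `-2(e² + β²)‖b‖‖d‖`, and AM-GM together with
`β < e < α` gives `(e² + β²)‖b‖‖d‖ ≤ 2αe‖b‖‖d‖ ≤ α(e²‖b‖² + ‖d‖²)`.
-/

open RealInnerProductSpace

section InnerProductSpace

variable {V : Type*} [NormedAddCommGroup V] [InnerProductSpace ℝ V]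

theorem two_mul_mul_inner_le_sq_add_sq (r : ℝ) (x y : V) :
    2 * r * ⟪x, y⟫ ≤ r ^ 2 * ‖x‖ ^ 2 + ‖y‖ ^ 2 := by
  have h := norm_sub_sq_real y (r • x)
  rw [real_inner_smul_right, norm_smul, mul_pow, Real.norm_eq_abs, sq_abs,
    real_inner_comm] at h
  linarith [sq_nonneg ‖y - r • x‖]

theorem smul_inner_sub_inner_le {c C : ℝ} (hc : 0 ≤ c) {x k : V} (hk : ‖k‖ ≤ C * ‖x‖) (y : V) :
    c * ⟪x, y⟫ - ⟪k, y⟫ ≤ (c + C) * ‖x‖ * ‖y‖ :=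
  calc c * ⟪x, y⟫ - ⟪k, y⟫ = ⟪c • x - k, y⟫ := by rw [inner_sub_left, real_inner_smul_left]
    _ ≤ ‖c • x - k‖ * ‖y‖ := real_inner_le_norm _ _
    _ ≤ (c * ‖x‖ + C * ‖x‖) * ‖y‖ := by
        gcongr
        calc ‖c • x - k‖ ≤ ‖c • x‖ + ‖k‖ := norm_sub_le _ _
          _ ≤ c * ‖x‖ + C * ‖x‖ := by rw [norm_smul, Real.norm_of_nonneg hc]; gcongr
    _ = (c + C) * ‖x‖ * ‖y‖ := by ring

end InnerProductSpace

theorem sq_add_sq_mul_mul_le {α β e p q : ℝ} (hβ : 0 ≤ β) (hβe : β ≤ e) (heα : e ≤ α)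
    (hp : 0 ≤ p) (hq : 0 ≤ q) :
    (e ^ 2 + β ^ 2) * p * q ≤ α * (e ^ 2 * p ^ 2 + q ^ 2) := by
  have hpq : 0 ≤ p * q := mul_nonneg hp hq
  have amgm : 2 * e * (p * q) ≤ e ^ 2 * p ^ 2 + q ^ 2 := by nlinarith [sq_nonneg (e * p - q)]
  have hcoef : e ^ 2 + β ^ 2 ≤ 2 * α * e := by nlinarith
  have hα : 0 ≤ α := hβ.trans hβe |>.trans heα
  linarith [mul_le_mul_of_nonneg_right hcoef hpq, mul_le_mul_of_nonneg_left amgm hα]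

theorem stmt_5_general {V : Type*} [NormedAddCommGroup V] [InnerProductSpace ℝ V]
    [FiniteDimensional ℝ V]
    (A B : Submodule ℝ V)
    (α β e : ℝ) (hβ : 0 < β) (hβe : β < e) (heα : e < α)
    (K : V →L[ℝ] V)
    (hKAneg : ∀ x ∈ A, ⟪K x, x⟫ ≤ -α ^ 2 * ‖x‖ ^ 2)
    (hKBsmall : ∀ x ∈ B, ‖K x‖ ≤ β ^ 2 * ‖x‖) :
    ∀ η ς : V,
      0 < ⟪(Submodule.orthogonalProjectionOnto A η : V), (Submodule.orthogonalProjectionOnto A ς : V)⟫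
          - e ^ 2 * ‖(Submodule.orthogonalProjectionOnto B η : V)‖ ^ 2
          - ‖(Submodule.orthogonalProjectionOnto B ς : V)‖ ^ 2 →
      0 < ‖(Submodule.orthogonalProjectionOnto A ς : V)‖ ^ 2
          - ⟪K (Submodule.orthogonalProjectionOnto A η : V), (Submodule.orthogonalProjectionOnto A η : V)⟫
          - 2 * e ^ 2 * ⟪(Submodule.orthogonalProjectionOnto B η : V), (Submodule.orthogonalProjectionOnto B ς : V)⟫
          + 2 * ⟪K (Submodule.orthogonalProjectionOnto B η : V), (Submodule.orthogonalProjectionOnto B ς : V)⟫ := by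
  intro η ς hcone
  set a : V := (Submodule.orthogonalProjectionOnto A η : V)
  set b : V := (Submodule.orthogonalProjectionOnto B η : V)
  set c : V := (Submodule.orthogonalProjectionOnto A ς : V)
  set d : V := (Submodule.orthogonalProjectionOnto B ς : V)
  have hα : 0 < α := hβ.trans hβe |>.trans heα
  have hA : 2 * α * ⟪a, c⟫ ≤ ‖c‖ ^ 2 - ⟪K a, a⟫ := by
    linarith [two_mul_mul_inner_le_sq_add_sq α a c, hKAneg a (Submodule.coe_mem _)]
  have hB : e ^ 2 * ⟪b, d⟫ - ⟪K b, d⟫ ≤ (e ^ 2 + β ^ 2) * ‖b‖ * ‖d‖ :=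
    smul_inner_sub_inner_le (sq_nonneg e) (hKBsmall b (Submodule.coe_mem _)) d
  have hcross := sq_add_sq_mul_mul_le hβ.le hβe.le heα.le (norm_nonneg b) (norm_nonneg d)
  linarith [mul_lt_mul_of_pos_left hcone hα]

/-- Positivity of the derivative of `Q^e` on the positive cone, unperturbed case `A' = 0`:
if `K` is symmetric, preserves `A` and `B`, with `⟪Kx,x⟫ ≤ -α²‖x‖²` on `A` and
`‖Kx‖ ≤ β²‖x‖` on `B`, and `β < e < α`, then the displayed expression is positive on the
positive cone of `Q^e`. -/
theorem stmt_5 {V : Type*} [NormedAddCommGroup V] [InnerProductSpace ℝ V]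
    [FiniteDimensional ℝ V]
    (A B : Submodule ℝ V) (hAB : B = Aᗮ)
    (α β e : ℝ) (hβ : 0 < β) (hβα : β < α) (hβe : β < e) (heα : e < α)
    (K : V →L[ℝ] V) (hKsym : IsSelfAdjoint K)
    (hKA : ∀ x ∈ A, K x ∈ A) (hKB : ∀ x ∈ B, K x ∈ B)
    (hKAneg : ∀ x ∈ A, ⟪K x, x⟫ ≤ -α ^ 2 * ‖x‖ ^ 2)
    (hKBsmall : ∀ x ∈ B, ‖K x‖ ≤ β ^ 2 * ‖x‖) :
    ∀ η ς : V,
      0 < ⟪(Submodule.orthogonalProjectionOnto A η : V), (Submodule.orthogonalProjectionOnto A ς : V)⟫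
          - e ^ 2 * ‖(Submodule.orthogonalProjectionOnto B η : V)‖ ^ 2
          - ‖(Submodule.orthogonalProjectionOnto B ς : V)‖ ^ 2 →
      0 < ‖(Submodule.orthogonalProjectionOnto A ς : V)‖ ^ 2
          - ⟪K (Submodule.orthogonalProjectionOnto A η : V), (Submodule.orthogonalProjectionOnto A η : V)⟫
          - 2 * e ^ 2 * ⟪(Submodule.orthogonalProjectionOnto B η : V), (Submodule.orthogonalProjectionOnto B ς : V)⟫
          + 2 * ⟪K (Submodule.orthogonalProjectionOnto B η : V), (Submodule.orthogonalProjectionOnto B ς : V)⟫ :=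
  stmt_5_general A B α β e hβ hβe heα K hKAneg hKBsmall
end

section
/- Let V be a nontrivial finite-dimensional real inner product space with an orthogonal direct sum decomposition V = A ⊕ B, with orthogonal projections P_A, P_B (write η_A = P_A η, η_B = P_B η). Let α > β > 0 and e ∈ (β, α). Let K : V →L[ℝ] V be a symmetric operator with K(A) ⊆ A and K(B) ⊆ B such that ⟨K x, x⟩ ≤ −α²‖x‖² for all x ∈ A, and ‖K x‖ ≤ β²‖x‖ for all x ∈ B. Then there exists ε > 0 such that for every linear operator D : V →L[ℝ] V with ‖D‖ < ε and all (η, ς) ∈ V × V with (η, ς) ≠ (0,0) and ⟨η_A, ς_A⟩ − e²‖η_B‖² − ‖ς_B‖² ≥ 0, one has ‖ς_A‖² − ⟨K η_A, η_A⟩ + ⟨D η_B, ς_A⟩ + ⟨η_A, D ς_B⟩ − 2e²⟨η_B, ς_B⟩ + 2⟨K η_B, ς_B⟩ + 2e²⟨D η_A, η_B⟩ + 2⟨D ς_A, ς_B⟩ > 0. -/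
/-!
Write `p, q, r, s` for the norms of `η_A, η_B, ς_A, ς_B`. The hypotheses on `K` and
Cauchy–Schwarz bound the expression below by
`r² + α²p² - 2(e² + β²)qs - ‖D‖ (qr + ps + 2e²pq + 2rs)`. On the cone, `e²q² + s² ≤ pr`, and two
AM–GM steps give `4αe·qs ≤ r² + α²p²`, so the quadratic part is at least
`(2αe - e² - β²)/(2αe) · (r² + α²p²)`. This is positive because `β < e < α`, and it dominates
`p² + q² + r² + s² = ‖η‖² + ‖ς‖²`, which in turn controls the `D`-terms; these are therefore
absorbed once `‖D‖` is small.
-/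

open RealInnerProductSpace

section ConeArithmetic

variable {α β e p q r s : ℝ}

theorem four_mul_mul_le_of_cone (hα : 0 < α) (hcone : e ^ 2 * q ^ 2 + s ^ 2 ≤ p * r) :
    4 * α * e * (q * s) ≤ r ^ 2 + α ^ 2 * p ^ 2 := by
  nlinarith [sq_nonneg (e * q - s), sq_nonneg (α * p - r)]

theorem sum_sq_le_of_cone (hα : 0 < α) (he : 0 < e) (hcone : e ^ 2 * q ^ 2 + s ^ 2 ≤ p * r) :
    p ^ 2 + q ^ 2 + r ^ 2 + s ^ 2
      ≤ (α⁻¹ ^ 2 + 1 + (2 * α * e ^ 2)⁻¹ + (2 * α)⁻¹) * (r ^ 2 + α ^ 2 * p ^ 2) := by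
  have hpr : 2 * α * (p * r) ≤ r ^ 2 + α ^ 2 * p ^ 2 := by nlinarith [sq_nonneg (α * p - r)]
  have hp : p ^ 2 ≤ α⁻¹ ^ 2 * (r ^ 2 + α ^ 2 * p ^ 2) := by
    rw [mul_add, ← mul_pow, ← mul_assoc, ← mul_pow, inv_mul_cancel₀ hα.ne']
    nlinarith [sq_nonneg (α⁻¹ * r)]
  have hq : q ^ 2 ≤ (2 * α * e ^ 2)⁻¹ * (r ^ 2 + α ^ 2 * p ^ 2) := by
    rw [inv_mul_eq_div, le_div_iff₀ (by positivity)]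
    nlinarith [sq_nonneg s]
  have hs : s ^ 2 ≤ (2 * α)⁻¹ * (r ^ 2 + α ^ 2 * p ^ 2) := by
    rw [inv_mul_eq_div, le_div_iff₀ (by positivity)]
    nlinarith [sq_nonneg (e * q)]
  have hr : r ^ 2 ≤ r ^ 2 + α ^ 2 * p ^ 2 := by nlinarith [sq_nonneg (α * p)]
  linarith

theorem cone_form_lower_bound (hα : 0 < α) (he : 0 < e)
    (hcone : e ^ 2 * q ^ 2 + s ^ 2 ≤ p * r) :
    (2 * α * e - e ^ 2 - β ^ 2) / (2 * α * e) * (r ^ 2 + α ^ 2 * p ^ 2)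
      ≤ r ^ 2 + α ^ 2 * p ^ 2 - 2 * (e ^ 2 + β ^ 2) * (q * s) := by
  have hqs := four_mul_mul_le_of_cone hα hcone
  rw [div_mul_eq_mul_div, div_le_iff₀ (by positivity)]
  nlinarith [mul_le_mul_of_nonneg_left hqs (by positivity : (0 : ℝ) ≤ e ^ 2 + β ^ 2)]

theorem cross_terms_le_sum_sq :
    q * r + p * s + 2 * e ^ 2 * p * q + 2 * r * s ≤ (2 + e ^ 2) * (p ^ 2 + q ^ 2 + r ^ 2 + s ^ 2) := by
  nlinarith [sq_nonneg (q - r), sq_nonneg (p - s), sq_nonneg (r - s),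
    mul_nonneg (sq_nonneg e) (sq_nonneg (p - q)), mul_nonneg (sq_nonneg e) (sq_nonneg r),
    mul_nonneg (sq_nonneg e) (sq_nonneg s), sq_nonneg p, sq_nonneg q, sq_nonneg r, sq_nonneg s]

theorem exists_pos_cross_terms_lt (hβ : 0 < β) (hβe : β < e) (heα : e < α) :
    ∃ ε > 0, ∀ δ p q r s : ℝ, 0 ≤ δ → δ < ε → e ^ 2 * q ^ 2 + s ^ 2 ≤ p * r →
      0 < p ^ 2 + q ^ 2 + r ^ 2 + s ^ 2 →
      δ * (q * r + p * s + 2 * e ^ 2 * p * q + 2 * r * s)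
        < r ^ 2 + α ^ 2 * p ^ 2 - 2 * (e ^ 2 + β ^ 2) * (q * s) := by
  have he : 0 < e := hβ.trans hβe
  have hα : 0 < α := he.trans heα
  set κ := (2 * α * e - e ^ 2 - β ^ 2) / (2 * α * e)
  set C := α⁻¹ ^ 2 + 1 + (2 * α * e ^ 2)⁻¹ + (2 * α)⁻¹
  have hκ : 0 < κ := by
    apply div_pos _ (by positivity)
    nlinarith [mul_pos he (sub_pos.2 heα), mul_pos (sub_pos.2 hβe) (add_pos he hβ)]
  have hC : 0 < C := by positivity
  refine ⟨κ / (C * (2 + e ^ 2)), by positivity, fun δ p q r s hδ hδε hcone hN => ?_⟩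
  have hsum := sum_sq_le_of_cone hα he hcone
  have hlow := cone_form_lower_bound (β := β) hα he hcone
  calc δ * (q * r + p * s + 2 * e ^ 2 * p * q + 2 * r * s)
      ≤ δ * ((2 + e ^ 2) * (p ^ 2 + q ^ 2 + r ^ 2 + s ^ 2)) :=
        mul_le_mul_of_nonneg_left cross_terms_le_sum_sq hδ
    _ < κ / (C * (2 + e ^ 2)) * ((2 + e ^ 2) * (p ^ 2 + q ^ 2 + r ^ 2 + s ^ 2)) :=
        mul_lt_mul_of_pos_right hδε (mul_pos (by positivity) hN)
    _ = κ / C * (p ^ 2 + q ^ 2 + r ^ 2 + s ^ 2) := by field_simp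
    _ ≤ κ / C * (C * (r ^ 2 + α ^ 2 * p ^ 2)) := mul_le_mul_of_nonneg_left hsum (by positivity)
    _ = κ * (r ^ 2 + α ^ 2 * p ^ 2) := by field_simp
    _ ≤ _ := hlow

end ConeArithmetic

section InnerBounds

variable {E F : Type*} [NormedAddCommGroup E] [InnerProductSpace ℝ E]
  [NormedAddCommGroup F] [InnerProductSpace ℝ F]

theorem neg_opNorm_mul_le_inner_apply (D : E →L[ℝ] F) (x : E) (y : F) :
    -(‖D‖ * (‖x‖ * ‖y‖)) ≤ ⟪D x, y⟫ := by
  have hDx : ‖D x‖ * ‖y‖ ≤ ‖D‖ * (‖x‖ * ‖y‖) := by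
    rw [← mul_assoc]
    exact mul_le_mul_of_nonneg_right (D.le_opNorm x) (norm_nonneg y)
  linarith [neg_le_of_abs_le (abs_real_inner_le_norm (D x) y)]

theorem cone_derivative_lower_bound {α β e : ℝ} (K D : E →L[ℝ] E) (a b c d : E)
    (hKa : ⟪K a, a⟫ ≤ -α ^ 2 * ‖a‖ ^ 2) (hKb : ‖K b‖ ≤ β ^ 2 * ‖b‖) :
    ‖c‖ ^ 2 + α ^ 2 * ‖a‖ ^ 2 - 2 * (e ^ 2 + β ^ 2) * (‖b‖ * ‖d‖)
        - ‖D‖ * (‖b‖ * ‖c‖ + ‖a‖ * ‖d‖ + 2 * e ^ 2 * ‖a‖ * ‖b‖ + 2 * ‖c‖ * ‖d‖)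
      ≤ ‖c‖ ^ 2 - ⟪K a, a⟫ + ⟪D b, c⟫ + ⟪a, D d⟫ - 2 * e ^ 2 * ⟪b, d⟫ + 2 * ⟪K b, d⟫
          + 2 * e ^ 2 * ⟪D a, b⟫ + 2 * ⟪D c, d⟫ := by
  have hKbd : -(β ^ 2 * (‖b‖ * ‖d‖)) ≤ ⟪K b, d⟫ := by
    have := mul_le_mul_of_nonneg_right hKb (norm_nonneg d)
    linarith [neg_le_of_abs_le (abs_real_inner_le_norm (K b) d)]
  have hbd := mul_le_mul_of_nonneg_left (real_inner_le_norm b d) (sq_nonneg e)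
  have hDab := mul_le_mul_of_nonneg_left (neg_opNorm_mul_le_inner_apply D a b) (sq_nonneg e)
  have hDda := neg_opNorm_mul_le_inner_apply D d a
  rw [real_inner_comm] at hDda
  linarith [neg_opNorm_mul_le_inner_apply D b c, neg_opNorm_mul_le_inner_apply D c d]

end InnerBounds

theorem stmt_6_general {V : Type*} [NormedAddCommGroup V] [InnerProductSpace ℝ V]
    [FiniteDimensional ℝ V]
    (A B : Submodule ℝ V) (hAB : B = Aᗮ)
    (α β e : ℝ) (hβ : 0 < β) (hβe : β < e) (heα : e < α)
    (K : V →L[ℝ] V)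
    (hKAneg : ∀ x ∈ A, ⟪K x, x⟫ ≤ -α ^ 2 * ‖x‖ ^ 2)
    (hKBsmall : ∀ x ∈ B, ‖K x‖ ≤ β ^ 2 * ‖x‖) :
    ∃ ε > 0, ∀ D : V →L[ℝ] V, ‖D‖ < ε →
      ∀ η ς : V, (η, ς) ≠ (0, 0) →
      0 ≤ ⟪(A.orthogonalProjection η : V), (A.orthogonalProjection ς : V)⟫
          - e ^ 2 * ‖(B.orthogonalProjection η : V)‖ ^ 2
          - ‖(B.orthogonalProjection ς : V)‖ ^ 2 →
      0 < ‖(A.orthogonalProjection ς : V)‖ ^ 2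
          - ⟪K (A.orthogonalProjection η : V), (A.orthogonalProjection η : V)⟫
          + ⟪D (B.orthogonalProjection η : V), (A.orthogonalProjection ς : V)⟫
          + ⟪(A.orthogonalProjection η : V), D (B.orthogonalProjection ς : V)⟫
          - 2 * e ^ 2 * ⟪(B.orthogonalProjection η : V), (B.orthogonalProjection ς : V)⟫
          + 2 * ⟪K (B.orthogonalProjection η : V), (B.orthogonalProjection ς : V)⟫
          + 2 * e ^ 2 * ⟪D (A.orthogonalProjection η : V), (B.orthogonalProjection η : V)⟫
          + 2 * ⟪D (A.orthogonalProjection ς : V), (B.orthogonalProjection ς : V)⟫ := by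
  subst hAB
  obtain ⟨ε, hε, hcross⟩ := exists_pos_cross_terms_lt hβ hβe heα
  refine ⟨ε, hε, fun D hD η ς hne hcone => ?_⟩
  set a : V := (A.orthogonalProjectionOnto η : V)
  set b : V := (Aᗮ.orthogonalProjectionOnto η : V)
  set c : V := (A.orthogonalProjectionOnto ς : V)
  set d : V := (Aᗮ.orthogonalProjectionOnto ς : V)
  have hη : ‖η‖ ^ 2 = ‖a‖ ^ 2 + ‖b‖ ^ 2 := Submodule.norm_sq_eq_add_norm_sq_projection η A
  have hς : ‖ς‖ ^ 2 = ‖c‖ ^ 2 + ‖d‖ ^ 2 := Submodule.norm_sq_eq_add_norm_sq_projection ς A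
  have hN : 0 < ‖η‖ ^ 2 + ‖ς‖ ^ 2 := by
    rcases eq_or_ne η 0 with rfl | hη0
    · have hς0 : ς ≠ 0 := fun h => hne (by rw [h])
      positivity
    · positivity
  have hcone' : e ^ 2 * ‖b‖ ^ 2 + ‖d‖ ^ 2 ≤ ‖a‖ * ‖c‖ := by linarith [real_inner_le_norm a c]
  refine (sub_pos.2 (hcross ‖D‖ _ _ _ _ (norm_nonneg D) hD hcone' (by linarith))).trans_le ?_
  exact cone_derivative_lower_bound K D a b c d (hKAneg a (SetLike.coe_mem _))
    (hKBsmall b (SetLike.coe_mem _))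

/-- Quantitative version of Corollary 3.2: if the perturbation `D` (modeling the derivative
`A'` of the projection family) has small enough norm, then the derivative of `Q^e` stays
positive on the closed positive cone minus the origin. -/
theorem stmt_6 {V : Type*} [NormedAddCommGroup V] [InnerProductSpace ℝ V]
    [FiniteDimensional ℝ V] [Nontrivial V]
    (A B : Submodule ℝ V) (hAB : B = Aᗮ)
    (α β e : ℝ) (hβ : 0 < β) (hβα : β < α) (hβe : β < e) (heα : e < α)
    (K : V →L[ℝ] V) (hKsym : IsSelfAdjoint K)
    (hKA : ∀ x ∈ A, K x ∈ A) (hKB : ∀ x ∈ B, K x ∈ B)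
    (hKAneg : ∀ x ∈ A, ⟪K x, x⟫ ≤ -α ^ 2 * ‖x‖ ^ 2)
    (hKBsmall : ∀ x ∈ B, ‖K x‖ ≤ β ^ 2 * ‖x‖) :
    ∃ ε > 0, ∀ D : V →L[ℝ] V, ‖D‖ < ε →
      ∀ η ς : V, (η, ς) ≠ (0, 0) →
      0 ≤ ⟪(A.orthogonalProjection η : V), (A.orthogonalProjection ς : V)⟫
          - e ^ 2 * ‖(B.orthogonalProjection η : V)‖ ^ 2
          - ‖(B.orthogonalProjection ς : V)‖ ^ 2 →
      0 < ‖(A.orthogonalProjection ς : V)‖ ^ 2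
          - ⟪K (A.orthogonalProjection η : V), (A.orthogonalProjection η : V)⟫
          + ⟪D (B.orthogonalProjection η : V), (A.orthogonalProjection ς : V)⟫
          + ⟪(A.orthogonalProjection η : V), D (B.orthogonalProjection ς : V)⟫
          - 2 * e ^ 2 * ⟪(B.orthogonalProjection η : V), (B.orthogonalProjection ς : V)⟫
          + 2 * ⟪K (B.orthogonalProjection η : V), (B.orthogonalProjection ς : V)⟫
          + 2 * e ^ 2 * ⟪D (A.orthogonalProjection η : V), (B.orthogonalProjection η : V)⟫
          + 2 * ⟪D (A.orthogonalProjection ς : V), (B.orthogonalProjection ς : V)⟫ :=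
  stmt_6_general A B hAB α β e hβ hβe heα K hKAneg hKBsmall
end

section
/- Let V be a finite-dimensional real inner product space with an orthogonal direct sum decomposition V = A ⊕ B, with orthogonal projections P_A, P_B (write η_A = P_A η, η_B = P_B η). Let a > 0 and e ∈ (a, 2a). Then for all η, ς ∈ V with ⟨η_A, ς_A⟩ − e²‖η_B‖² − ‖ς_B‖² > 0, one has 4a²‖η_A‖² + ‖ς_A‖² − 2e²⟨η_B, ς_B⟩ − 2a²⟨η_B, ς_B⟩ > 0. -/
/-!
Cauchy–Schwarz and AM–GM give the chain
`2(e² + a²)⟪η_B, ς_B⟫ ≤ 8ae‖η_B‖‖ς_B‖ ≤ 4a(e²‖η_B‖² + ‖ς_B‖²) < 4a⟪η_A, ς_A⟫ ≤ 4a²‖η_A‖² + ‖ς_A‖²`,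
whose strict step is the cone condition. The second step needs only `e² + a² ≤ 4ae`,
which `a < e < 2a` guarantees since `4ae - e² - a² = (e - a)(3a - e) + 2a²`.
-/

open RealInnerProductSpace

lemma sq_add_sq_le_four_mul_mul {a e : ℝ} (hae : a < e) (he2a : e < 2 * a) :
    e ^ 2 + a ^ 2 ≤ 4 * a * e := by
  nlinarith [mul_pos (sub_pos.mpr hae) (sub_pos.mpr he2a)]

lemma quadratic_pos_of_cone_pos {V : Type*} [NormedAddCommGroup V] [InnerProductSpace ℝ V]
    {a e : ℝ} (ha : 0 < a) (hae : e ^ 2 + a ^ 2 ≤ 4 * a * e) {x y u w : V}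
    (hcone : 0 < ⟪x, y⟫ - e ^ 2 * ‖u‖ ^ 2 - ‖w‖ ^ 2) :
    0 < 4 * a ^ 2 * ‖x‖ ^ 2 + ‖y‖ ^ 2 - 2 * e ^ 2 * ⟪u, w⟫ - 2 * a ^ 2 * ⟪u, w⟫ := by
  have huw : 0 ≤ ‖u‖ * ‖w‖ := by positivity
  suffices 2 * (e ^ 2 + a ^ 2) * ⟪u, w⟫ < 4 * a ^ 2 * ‖x‖ ^ 2 + ‖y‖ ^ 2 by linarith
  calc 2 * (e ^ 2 + a ^ 2) * ⟪u, w⟫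
      ≤ 2 * (e ^ 2 + a ^ 2) * (‖u‖ * ‖w‖) := by gcongr; exact real_inner_le_norm u w
    _ ≤ 2 * (4 * a * e) * (‖u‖ * ‖w‖) := by gcongr
    _ ≤ 4 * a * (e ^ 2 * ‖u‖ ^ 2 + ‖w‖ ^ 2) := by
        nlinarith [mul_nonneg ha.le (sq_nonneg (e * ‖u‖ - ‖w‖))]
    _ < 4 * a * ⟪x, y⟫ := by gcongr; linarith
    _ ≤ 4 * a * (‖x‖ * ‖y‖) := by gcongr; exact real_inner_le_norm x y
    _ ≤ 4 * a ^ 2 * ‖x‖ ^ 2 + ‖y‖ ^ 2 := by nlinarith [sq_nonneg (2 * a * ‖x‖ - ‖y‖)]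

theorem stmt_9_general {V : Type*} [NormedAddCommGroup V] [InnerProductSpace ℝ V]
    [FiniteDimensional ℝ V]
    (A B : Submodule ℝ V)
    (a e : ℝ) (ha : 0 < a) (hae : a < e) (he2a : e < 2 * a) :
    ∀ η ς : V,
      0 < ⟪(A.orthogonalProjectionOnto η : V), (A.orthogonalProjectionOnto ς : V)⟫
          - e ^ 2 * ‖(B.orthogonalProjectionOnto η : V)‖ ^ 2
          - ‖(B.orthogonalProjectionOnto ς : V)‖ ^ 2 →
      0 < 4 * a ^ 2 * ‖(A.orthogonalProjectionOnto η : V)‖ ^ 2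
          + ‖(A.orthogonalProjectionOnto ς : V)‖ ^ 2
          - 2 * e ^ 2 * ⟪(B.orthogonalProjectionOnto η : V), (B.orthogonalProjectionOnto ς : V)⟫
          - 2 * a ^ 2 * ⟪(B.orthogonalProjectionOnto η : V), (B.orthogonalProjectionOnto ς : V)⟫ :=
  fun _ _ => quadratic_pos_of_cone_pos ha (sq_add_sq_le_four_mul_mul hae he2a)

/-- The rank-one locally symmetric computation: on the positive cone of `Q^e`, with
`a < e < 2a`, the quantity `4a²‖η_A‖² + ‖ς_A‖² - 2e²⟪η_B,ς_B⟫ - 2a²⟪η_B,ς_B⟫` is positive. -/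
theorem stmt_9 {V : Type*} [NormedAddCommGroup V] [InnerProductSpace ℝ V]
    [FiniteDimensional ℝ V]
    (A B : Submodule ℝ V) (hAB : B = Aᗮ)
    (a e : ℝ) (ha : 0 < a) (hae : a < e) (he2a : e < 2 * a) :
    ∀ η ς : V,
      0 < ⟪(A.orthogonalProjectionOnto η : V), (A.orthogonalProjectionOnto ς : V)⟫
          - e ^ 2 * ‖(B.orthogonalProjectionOnto η : V)‖ ^ 2
          - ‖(B.orthogonalProjectionOnto ς : V)‖ ^ 2 →
      0 < 4 * a ^ 2 * ‖(A.orthogonalProjectionOnto η : V)‖ ^ 2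
          + ‖(A.orthogonalProjectionOnto ς : V)‖ ^ 2
          - 2 * e ^ 2 * ⟪(B.orthogonalProjectionOnto η : V), (B.orthogonalProjectionOnto ς : V)⟫
          - 2 * a ^ 2 * ⟪(B.orthogonalProjectionOnto η : V), (B.orthogonalProjectionOnto ς : V)⟫ :=
  stmt_9_general A B a e ha hae he2a
end

section
/- Let V be a finite-dimensional real inner product space with an orthogonal direct sum decomposition V = A ⊕ B, with orthogonal projections P_A, P_B (write η_A = P_A η, η_B = P_B η). Let a > 0 and e ∈ (a, 2a). Let η, ς : ℝ → V be differentiable curves with η'(t) = ς(t) and ς'(t) = 4a²η_A(t) + a²η_B(t), and set Q^e(t) = ⟨η_A(t), ς_A(t)⟩ − e²‖η_B(t)‖² − ‖ς_B(t)‖². Then for every t with Q^e(t) > 0, one has (Q^e)'(t) > 0. -/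
/-!
Differentiating `Q^e` along the flow gives
`(Q^e)' = ‖ς_A‖² + 4a²‖η_A‖² - 2(e² + a²)⟪η_B, ς_B⟫`.
Completing squares, `‖ς_A‖² + 4a²‖η_A‖² ≥ 4a⟪η_A, ς_A⟫` and
`2e⟪η_B, ς_B⟫ ≤ e²‖η_B‖² + ‖ς_B‖²`. On the cone `Q^e > 0` the first bound gives
`(Q^e)' > 4a(e²‖η_B‖² + ‖ς_B‖²) - 2(e² + a²)⟪η_B, ς_B⟫`,
which is nonnegative by the second bound as soon as `e² + a² ≤ 4ae`, a condition that holds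
for `a < e < 2a`.
-/

open RealInnerProductSpace Submodule

section

variable {V : Type*} [NormedAddCommGroup V] [InnerProductSpace ℝ V]

theorem two_mul_mul_inner_le_sq_mul_norm_sq_add_norm_sq (c : ℝ) (x y : V) :
    2 * c * ⟪x, y⟫ ≤ c ^ 2 * ‖x‖ ^ 2 + ‖y‖ ^ 2 := by
  have h := norm_sub_sq_real (c • x) y
  rw [norm_smul, real_inner_smul_left, mul_pow, Real.norm_eq_abs, sq_abs] at h
  nlinarith [sq_nonneg ‖c • x - y‖]

/-- `Q^e` at `η_A = x`, `ς_A = y`, `η_B = u`, `ς_B = v`. -/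
def quadForm (e : ℝ) (x y u v : V) : ℝ :=
  ⟪x, y⟫ - e ^ 2 * ‖u‖ ^ 2 - ‖v‖ ^ 2

theorem hasDerivAt_quadForm (e : ℝ) {x y u v : ℝ → V} {c d t : ℝ}
    (hx : HasDerivAt x (y t) t) (hy : HasDerivAt y (c • x t) t)
    (hu : HasDerivAt u (v t) t) (hv : HasDerivAt v (d • u t) t) :
    HasDerivAt (fun s => quadForm e (x s) (y s) (u s) (v s))
      (‖y t‖ ^ 2 + c * ‖x t‖ ^ 2 - 2 * (e ^ 2 + d) * ⟪u t, v t⟫) t := by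
  refine (((hx.inner ℝ hy).sub (hu.norm_sq.const_mul (e ^ 2))).sub hv.norm_sq).congr_deriv ?_
  rw [real_inner_smul_right, real_inner_smul_right, real_inner_self_eq_norm_sq,
    real_inner_self_eq_norm_sq, real_inner_comm (u t)]
  ring

theorem norm_sq_add_sub_inner_pos_of_quadForm_pos {a e : ℝ} (ha : 0 < a)
    (hae : e ^ 2 + a ^ 2 ≤ 4 * a * e)
    {x y u v : V} (hQ : 0 < quadForm e x y u v) :
    0 < ‖y‖ ^ 2 + 4 * a ^ 2 * ‖x‖ ^ 2 - 2 * (e ^ 2 + a ^ 2) * ⟪u, v⟫ := by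
  have hA := two_mul_mul_inner_le_sq_mul_norm_sq_add_norm_sq (2 * a) x y
  have hB := two_mul_mul_inner_le_sq_mul_norm_sq_add_norm_sq e u v
  unfold quadForm at hQ
  rcases le_total ⟪u, v⟫ 0 with huv | huv
  · have hxy : 0 < ⟪x, y⟫ := by nlinarith [sq_nonneg ‖u‖, sq_nonneg ‖v‖]
    nlinarith [mul_pos ha hxy,
      mul_nonpos_of_nonneg_of_nonpos (by positivity : 0 ≤ e ^ 2 + a ^ 2) huv]
  · nlinarith [mul_le_mul_of_nonneg_left hB ha.le, mul_le_mul_of_nonneg_right hae huv]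

theorem HasDerivAt.starProjection (K : Submodule ℝ V) [K.HasOrthogonalProjection]
    {γ : ℝ → V} {γ' : V} {t : ℝ} (h : HasDerivAt γ γ' t) :
    HasDerivAt (fun s => K.starProjection (γ s)) (K.starProjection γ') t :=
  K.starProjection.hasFDerivAt.comp_hasDerivAt t h

theorem HasDerivAt.starProjection_of_split (K : Submodule ℝ V) [K.HasOrthogonalProjection]
    {γ : ℝ → V} {x : V} {c d t : ℝ}
    (h : HasDerivAt γ (c • K.starProjection x + d • Kᗮ.starProjection x) t) :
    HasDerivAt (fun s => K.starProjection (γ s)) (c • K.starProjection x) t ∧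
      HasDerivAt (fun s => Kᗮ.starProjection (γ s)) (d • Kᗮ.starProjection x) t := by
  have hK : c • K.starProjection x ∈ K := K.smul_mem c (K.starProjection_apply_mem x)
  have hK' : d • Kᗮ.starProjection x ∈ Kᗮ :=
    Kᗮ.smul_mem d (Kᗮ.starProjection_apply_mem x)
  constructor
  · convert h.starProjection K using 1
    exact (eq_starProjection_of_mem_orthogonal' hK hK' rfl).symm
  · convert h.starProjection Kᗮ using 1
    exact (eq_starProjection_of_mem_orthogonal' hK' (K.le_orthogonal_orthogonal hK)
      (add_comm _ _)).symm

end

/-- Strict monotonicity of `Q^e` on its positive cone for the rank-one locally symmetric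
linearized geodesic flow `η' = ς`, `ς' = 4a²η_A + a²η_B`, with `a < e < 2a`. -/
theorem stmt_10 {V : Type*} [NormedAddCommGroup V] [InnerProductSpace ℝ V]
    [FiniteDimensional ℝ V]
    (A B : Submodule ℝ V) (hAB : B = Aᗮ)
    (a e : ℝ) (ha : 0 < a) (hae : a < e) (he2a : e < 2 * a)
    (η ς : ℝ → V) (hη : Differentiable ℝ η) (hς : Differentiable ℝ ς)
    (hη' : ∀ t, deriv η t = ς t)
    (hς' : ∀ t, deriv ς t =
      (4 * a ^ 2) • (A.orthogonalProjectionOnto (η t) : V)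
        + a ^ 2 • (B.orthogonalProjectionOnto (η t) : V)) :
    ∀ t : ℝ,
      0 < ⟪(A.orthogonalProjectionOnto (η t) : V), (A.orthogonalProjectionOnto (ς t) : V)⟫
          - e ^ 2 * ‖(B.orthogonalProjectionOnto (η t) : V)‖ ^ 2
          - ‖(B.orthogonalProjectionOnto (ς t) : V)‖ ^ 2 →
      0 < deriv (fun s =>
        ⟪(A.orthogonalProjectionOnto (η s) : V), (A.orthogonalProjectionOnto (ς s) : V)⟫
          - e ^ 2 * ‖(B.orthogonalProjectionOnto (η s) : V)‖ ^ 2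
          - ‖(B.orthogonalProjectionOnto (ς s) : V)‖ ^ 2) t := by
  intro t hQ
  subst hAB
  simp only [coe_orthogonalProjectionOnto_apply] at hς' hQ ⊢
  have hηt : HasDerivAt η (ς t) t := hη' t ▸ (hη t).hasDerivAt
  have hςt := hς' t ▸ (hς t).hasDerivAt
  obtain ⟨hςA, hςB⟩ := hςt.starProjection_of_split A
  have hQ' := hasDerivAt_quadForm e
    (x := fun s => A.starProjection (η s)) (y := fun s => A.starProjection (ς s))
    (u := fun s => Aᗮ.starProjection (η s)) (v := fun s => Aᗮ.starProjection (ς s))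
    (hηt.starProjection A) hςA (hηt.starProjection Aᗮ) hςB
  convert norm_sq_add_sub_inner_pos_of_quadForm_pos ha (by nlinarith) hQ using 1
  exact hQ'.deriv
end
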